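/- arXiv:1812.06165 — 6 statements merged into one kernel-verified Lean document; each statement's English description precedes it below -/
import Mathlib

section
/- Let A ∈ ℝ^{m×n}, b ∈ ℝ^m, L ∈ ℝ^{s×n} with L having full column rank, and let W_1,…,W_k ∈ ℝ^{m×ℓ} be arbitrary matrices. Write A_i = W_iᵀA and b_i = W_iᵀb. Fix λ > 0 and y_0 ∈ ℝ^n, and define the regularized recursive least squares iterates y_j = y_{j-1} − B_j A_jᵀ(A_j y_{j-1} − b_j) where B_j = (λ LᵀL + Σ_{i=1}^{j} A_iᵀA_i)^{-1}. Then y_k is the unique minimizer of x ↦ Σ_{i=1}^{k} ‖A_i x − b_i‖² + λ‖L(x − y_0)‖². -/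
/-!
The objective is the quadratic `x ⬝ᵥ Gₖ x - 2 x ⬝ᵥ r + c` with `Gₖ = λ LᵀL + Σ AᵢᵀAᵢ`, which is
positive definite because `L` is injective; hence its unique minimizer is the solution of the
normal equations `Gₖ x = r`. The recursion keeps `Gⱼ yⱼ = λ LᵀL y₀ + Σ_{i<j} Aᵢᵀbᵢ` for every `j`,
so `yₖ` is that solution.
-/

open Matrix Finset

namespace Matrix

theorem mulVec_injective_of_rank_eq_card {m n K : Type*} [Fintype n] [Field K]
    {M : Matrix m n K} (hM : M.rank = Fintype.card n) : Function.Injective M.mulVec := by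
  have h := LinearMap.finrank_range_add_finrank_ker M.mulVecLin
  rw [← rank, hM, Module.finrank_fintype_fun_eq_card, add_eq_left, Submodule.finrank_eq_zero,
    LinearMap.ker_eq_bot] at h
  exact h

section CommRing

variable {n p R : Type*} [Fintype n] [Fintype p] [CommRing R]

theorem dotProduct_self_mulVec_sub (C : Matrix p n R) (x : n → R) (d : p → R) :
    (C *ᵥ x - d) ⬝ᵥ (C *ᵥ x - d) =
      x ⬝ᵥ ((Cᵀ * C) *ᵥ x) - 2 * (x ⬝ᵥ (Cᵀ *ᵥ d)) + d ⬝ᵥ d := by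
  rw [← mulVec_mulVec, dotProduct_transpose_mulVec, dotProduct_transpose_mulVec, sub_dotProduct,
    dotProduct_sub, dotProduct_sub, dotProduct_comm d]
  ring

theorem sum_dotProduct_self_mulVec_sub {ι : Type*} (t : Finset ι) (C : ι → Matrix p n R)
    (d : ι → p → R) (x : n → R) :
    ∑ i ∈ t, (C i *ᵥ x - d i) ⬝ᵥ (C i *ᵥ x - d i) =
      x ⬝ᵥ ((∑ i ∈ t, (C i)ᵀ * C i) *ᵥ x) - 2 * (x ⬝ᵥ ∑ i ∈ t, (C i)ᵀ *ᵥ d i)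
        + ∑ i ∈ t, d i ⬝ᵥ d i := by
  simp only [dotProduct_self_mulVec_sub, sum_mulVec, dotProduct_sum, sum_add_distrib,
    sum_sub_distrib, mul_sum]

theorem regularized_sum_dotProduct_self_mulVec_sub {s ι : Type*} [Fintype s] (t : Finset ι)
    (C : ι → Matrix p n R) (d : ι → p → R) (L : Matrix s n R) (lam : R) (x₀ x : n → R) :
    ∑ i ∈ t, (C i *ᵥ x - d i) ⬝ᵥ (C i *ᵥ x - d i) + lam * ((L *ᵥ (x - x₀)) ⬝ᵥ (L *ᵥ (x - x₀))) =
      x ⬝ᵥ ((lam • (Lᵀ * L) + ∑ i ∈ t, (C i)ᵀ * C i) *ᵥ x)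
        - 2 * (x ⬝ᵥ ((lam • (Lᵀ * L)) *ᵥ x₀ + ∑ i ∈ t, (C i)ᵀ *ᵥ d i))
        + (∑ i ∈ t, d i ⬝ᵥ d i + lam * ((L *ᵥ x₀) ⬝ᵥ (L *ᵥ x₀))) := by
  rw [sum_dotProduct_self_mulVec_sub, mulVec_sub, dotProduct_self_mulVec_sub, add_mulVec,
    dotProduct_add, dotProduct_add, smul_mulVec, smul_mulVec, dotProduct_smul, dotProduct_smul,
    smul_eq_mul, smul_eq_mul, mulVec_mulVec]
  ring

theorem dotProduct_mulVec_sub_two_mul_dotProduct {M : Matrix n n R} (hM : Mᵀ = M) {z r : n → R}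
    (hz : M *ᵥ z = r) (x : n → R) :
    x ⬝ᵥ (M *ᵥ x) - 2 * (x ⬝ᵥ r) = (x - z) ⬝ᵥ (M *ᵥ (x - z)) - z ⬝ᵥ r := by
  have hsymm : z ⬝ᵥ (M *ᵥ x) = x ⬝ᵥ r := by
    rw [← hz, ← dotProduct_transpose_mulVec, hM]
  rw [mulVec_sub, dotProduct_sub, sub_dotProduct, sub_dotProduct, hsymm, hz]
  ring

end CommRing

theorem posDef_smul_transpose_mul_self_add_sum {n s p ι : Type*} [Fintype n] [Fintype s]
    [Fintype p] {L : Matrix s n ℝ} (hL : Function.Injective L.mulVec) {lam : ℝ} (hlam : 0 < lam)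
    (t : Finset ι) (C : ι → Matrix p n ℝ) :
    (lam • (Lᵀ * L) + ∑ i ∈ t, (C i)ᵀ * C i).PosDef := by
  have hL := (PosDef.conjTranspose_mul_self L hL).smul hlam
  have hC := posSemidef_sum t fun i _ => posSemidef_conjTranspose_mul_self (C i)
  simp only [conjTranspose_eq_transpose_of_trivial] at hL hC
  exact hL.add_posSemidef hC

theorem PosDef.quadratic_unique_min_of_mulVec_eq {n : Type*} [Fintype n] {M : Matrix n n ℝ}
    (hM : M.PosDef) {z r : n → ℝ} (hz : M *ᵥ z = r) {c : ℝ} {f : (n → ℝ) → ℝ}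
    (hf : ∀ x, f x = x ⬝ᵥ (M *ᵥ x) - 2 * (x ⬝ᵥ r) + c) :
    (∀ x, f z ≤ f x) ∧ ∀ x, (∀ w, f x ≤ f w) → x = z := by
  have hsymm : Mᵀ = M := by simpa using hM.isHermitian.eq
  have hf_sub : ∀ x, f x = f z + (x - z) ⬝ᵥ (M *ᵥ (x - z)) := by
    intro x
    rw [hf, hf, dotProduct_mulVec_sub_two_mul_dotProduct hsymm hz x,
      dotProduct_mulVec_sub_two_mul_dotProduct hsymm hz z, sub_self, mulVec_zero, dotProduct_zero]
    ring
  refine ⟨fun x => ?_, fun x hx => ?_⟩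
  · rw [hf_sub x]
    simpa using hM.posSemidef.dotProduct_mulVec_nonneg (x - z)
  · by_contra hxz
    have hpos := hM.dotProduct_mulVec_pos (sub_ne_zero.mpr hxz)
    rw [star_trivial] at hpos
    linarith [hf_sub x, hx z]

end Matrix

theorem rls_normal_equations {n p R : Type*} [Fintype n] [DecidableEq n] [Fintype p]
    [CommRing R] (M₀ : Matrix n n R) (C : ℕ → Matrix p n R) (d : ℕ → p → R)
    (hunit : ∀ j, IsUnit (M₀ + ∑ i ∈ range j, (C i)ᵀ * C i).det) (y : ℕ → n → R)
    (hy : ∀ j, y (j + 1) = y j - (M₀ + ∑ i ∈ range (j + 1), (C i)ᵀ * C i)⁻¹ *ᵥ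
      ((C j)ᵀ *ᵥ (C j *ᵥ y j - d j))) (j : ℕ) :
    (M₀ + ∑ i ∈ range j, (C i)ᵀ * C i) *ᵥ y j = M₀ *ᵥ y 0 + ∑ i ∈ range j, (C i)ᵀ *ᵥ d i := by
  induction j with
  | zero => simp
  | succ j ih =>
    -- multiplying the update by `G (j+1) = G j + C jᵀ C j` cancels the inverse
    rw [hy j, mulVec_sub, mulVec_mulVec, mul_nonsing_inv _ (hunit _), one_mulVec,
      sum_range_succ, ← add_assoc, add_mulVec, ih, ← mulVec_mulVec, mulVec_sub, sum_range_succ]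
    abel

theorem rrls_iterate_is_unique_minimizer_general
    {n s ℓ : ℕ} (k : ℕ)
    (L : Matrix (Fin s) (Fin n) ℝ) (hL : L.rank = n)
    (Ai : ℕ → Matrix (Fin ℓ) (Fin n) ℝ)
    (bi : ℕ → Fin ℓ → ℝ)
    (lam : ℝ) (hlam : 0 < lam) (y0 : Fin n → ℝ)
    (B : ℕ → Matrix (Fin n) (Fin n) ℝ)
    (hB : ∀ j, B j = (lam • (Lᵀ * L) + ∑ i ∈ Finset.range j, (Ai i)ᵀ * Ai i)⁻¹)
    (y : ℕ → Fin n → ℝ) (hy0 : y 0 = y0)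
    (hy : ∀ j, y (j + 1) =
      y j - (B (j + 1)).mulVec ((Ai j)ᵀ.mulVec ((Ai j).mulVec (y j) - bi j)))
    (f : (Fin n → ℝ) → ℝ)
    (hf : ∀ x, f x = (∑ i ∈ Finset.range k, ∑ p, ((Ai i).mulVec x - bi i) p ^ 2)
        + lam * ∑ p, (L.mulVec (x - y0)) p ^ 2) :
    (∀ x, f (y k) ≤ f x) ∧ (∀ x, (∀ z, f x ≤ f z) → x = y k) := by
  have hpos : ∀ j, (lam • (Lᵀ * L) + ∑ i ∈ range j, (Ai i)ᵀ * Ai i).PosDef := fun j =>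
    posDef_smul_transpose_mul_self_add_sum
      (mulVec_injective_of_rank_eq_card (by simpa using hL)) hlam _ _
  have hnormal := rls_normal_equations _ Ai bi (fun j => (isUnit_iff_isUnit_det _).mp
    (hpos j).isUnit) y (fun j => by rw [hy, hB]) k
  rw [hy0] at hnormal
  have hsq : ∀ {q : ℕ} (v : Fin q → ℝ), ∑ p, v p ^ 2 = v ⬝ᵥ v := fun v => by
    simp only [dotProduct, sq]
  exact (hpos k).quadratic_unique_min_of_mulVec_eq hnormal fun x => by
    simp only [hf, hsq]
    exact regularized_sum_dotProduct_self_mulVec_sub _ _ _ _ _ _ _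

/-- the rrls iterate `y k` is the unique minimizer of
`x ↦ Σ_{i=1}^k ‖A_i x − b_i‖² + λ‖L(x − y₀)‖²`. -/
theorem rrls_iterate_is_unique_minimizer
    {m n s ℓ : ℕ} (k : ℕ)
    (A : Matrix (Fin m) (Fin n) ℝ) (b : Fin m → ℝ)
    (L : Matrix (Fin s) (Fin n) ℝ) (hL : L.rank = n)
    (W : ℕ → Matrix (Fin m) (Fin ℓ) ℝ)
    (Ai : ℕ → Matrix (Fin ℓ) (Fin n) ℝ) (hAi : ∀ i, Ai i = (W i)ᵀ * A)
    (bi : ℕ → Fin ℓ → ℝ) (hbi : ∀ i, bi i = (W i)ᵀ.mulVec b)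
    (lam : ℝ) (hlam : 0 < lam) (y0 : Fin n → ℝ)
    (B : ℕ → Matrix (Fin n) (Fin n) ℝ)
    (hB : ∀ j, B j = (lam • (Lᵀ * L) + ∑ i ∈ Finset.range j, (Ai i)ᵀ * Ai i)⁻¹)
    (y : ℕ → Fin n → ℝ) (hy0 : y 0 = y0)
    (hy : ∀ j, y (j + 1) =
      y j - (B (j + 1)).mulVec ((Ai j)ᵀ.mulVec ((Ai j).mulVec (y j) - bi j)))
    (f : (Fin n → ℝ) → ℝ)
    (hf : ∀ x, f x = (∑ i ∈ Finset.range k, ∑ p, ((Ai i).mulVec x - bi i) p ^ 2)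
        + lam * ∑ p, (L.mulVec (x - y0)) p ^ 2) :
    (∀ x, f (y k) ≤ f x) ∧ (∀ x, (∀ z, f x ≤ f z) → x = y k) :=
  rrls_iterate_is_unique_minimizer_general k L hL Ai bi lam hlam y0 B hB y hy0 hy f hf
end

section
/- Let x_{k-1} = B_{k-1} Σ_{i=1}^{k-1} A_iᵀ b_i where B_{k-1} = (λ_{k-1} LᵀL + Σ_{i=1}^{k-1} A_iᵀA_i)^{-1} and λ_{k-1} = Σ_{i=1}^{k-1} Λ_i > 0. Define x_k = x_{k-1} − B_k (A_kᵀ(A_k x_{k-1} − b_k) + Λ_k LᵀL x_{k-1}) with B_k = (λ_k LᵀL + Σ_{i=1}^{k} A_iᵀA_i)^{-1}, λ_k = λ_{k-1} + Λ_k > 0. Then x_k = B_k Σ_{i=1}^{k} A_iᵀ b_i. -/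
open Matrix Finset

/-!
Write `M_j = λ_j LᵀL + ∑_{i<j} A_iᵀA_i`; it is positive definite, hence invertible, because
`L` is injective. Since `λ_{k+1} = λ_k + Λ_k`, we have `M_{k+1} = M_k + D` with
`D = A_kᵀA_k + Λ_k LᵀL`, and the update of the previous iterate `x` reads
`x - M_{k+1}⁻¹ (D x - A_kᵀb_k)`. Writing `x = M_{k+1}⁻¹ M_{k+1} x` turns it into
`M_{k+1}⁻¹ (M_k x + A_kᵀb_k)`, and `M_k x = ∑_{i<k} A_iᵀb_i` by the hypothesis on `x`.
-/

theorem Matrix.mulVec_injective_of_rank_eq_card_s3 {m n K : Type*} [Fintype m] [Fintype n] [Field K]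
    {A : Matrix m n K} (hA : A.rank = Fintype.card n) : Function.Injective A.mulVec := by
  have hker : Module.finrank K (LinearMap.ker A.mulVecLin) = 0 := by
    have := LinearMap.finrank_range_add_finrank_ker A.mulVecLin
    rw [← Matrix.rank, hA, Module.finrank_fintype_fun_eq_card] at this
    omega
  exact LinearMap.ker_eq_bot.mp (Submodule.finrank_eq_zero.mp hker)

theorem Matrix.posDef_smul_transpose_mul_self_add_sum_s3 {ι l m n : Type*} [Fintype l] [Fintype m]
    [Fintype n] {L : Matrix m n ℝ} (hL : Function.Injective L.mulVec) {c : ℝ} (hc : 0 < c)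
    (A : ι → Matrix l n ℝ) (s : Finset ι) :
    (c • (Lᵀ * L) + ∑ i ∈ s, (A i)ᵀ * A i).PosDef :=
  ((PosDef.conjTranspose_mul_self L hL).smul hc).add_posSemidef
    (posSemidef_sum s fun i _ ↦ posSemidef_conjTranspose_mul_self (A i))

theorem Matrix.sub_inv_mulVec_sub {n K : Type*} [Fintype n] [DecidableEq n] [Field K]
    {M : Matrix n n K} (hM : IsUnit M.det) (D : Matrix n n K) (x r : n → K) :
    x - M⁻¹ *ᵥ (D *ᵥ x - r) = M⁻¹ *ᵥ ((M - D) *ᵥ x + r) := by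
  calc x - M⁻¹ *ᵥ (D *ᵥ x - r) = M⁻¹ *ᵥ (M *ᵥ x) - M⁻¹ *ᵥ (D *ᵥ x - r) := by
        rw [mulVec_mulVec, nonsing_inv_mul M hM, one_mulVec]
    _ = M⁻¹ *ᵥ ((M - D) *ᵥ x + r) := by
        rw [← mulVec_sub, sub_mulVec]
        congr 1
        abel

/-- single-step induction: if `x_{k-1} = B_{k-1} Σ_{i<k} A_iᵀ b_i`, then the
sampled Tikhonov update produces `x_k = B_k Σ_{i≤k} A_iᵀ b_i`. (0-based: step from `k` to
`k+1` blocks.) -/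
theorem sTik_single_step
    {n s ℓ : ℕ} (k : ℕ)
    (L : Matrix (Fin s) (Fin n) ℝ) (hL : L.rank = n)
    (Ai : ℕ → Matrix (Fin ℓ) (Fin n) ℝ) (bi : ℕ → Fin ℓ → ℝ)
    (Lam : ℕ → ℝ) (lam : ℕ → ℝ)
    (hlamdef : ∀ j, lam j = ∑ i ∈ Finset.range j, Lam i)
    (hprev : 0 < lam k) (hcur : 0 < lam (k + 1))
    (Bprev Bcur : Matrix (Fin n) (Fin n) ℝ)
    (hBprev : Bprev = (lam k • (Lᵀ * L) + ∑ i ∈ Finset.range k, (Ai i)ᵀ * Ai i)⁻¹)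
    (hBcur : Bcur = (lam (k + 1) • (Lᵀ * L) + ∑ i ∈ Finset.range (k + 1), (Ai i)ᵀ * Ai i)⁻¹)
    (xprev xcur : Fin n → ℝ)
    (hxprev : xprev = Bprev.mulVec (∑ i ∈ Finset.range k, (Ai i)ᵀ.mulVec (bi i)))
    (hxcur : xcur = xprev - Bcur.mulVec
      ((Ai k)ᵀ.mulVec ((Ai k).mulVec xprev - bi k) + Lam k • (Lᵀ * L).mulVec xprev)) :
    xcur = Bcur.mulVec (∑ i ∈ Finset.range (k + 1), (Ai i)ᵀ.mulVec (bi i)) := by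
  have hLinj : Function.Injective L.mulVec :=
    mulVec_injective_of_rank_eq_card_s3 (by rwa [Fintype.card_fin])
  have hdet {j : ℕ} (hj : 0 < lam j) :
      IsUnit (lam j • (Lᵀ * L) + ∑ i ∈ Finset.range j, (Ai i)ᵀ * Ai i).det :=
    (isUnit_iff_isUnit_det _).mp (posDef_smul_transpose_mul_self_add_sum_s3 hLinj hj Ai _).isUnit
  set D := (Ai k)ᵀ * Ai k + Lam k • (Lᵀ * L) with hD
  have hsplit : lam (k + 1) • (Lᵀ * L) + ∑ i ∈ Finset.range (k + 1), (Ai i)ᵀ * Ai i - D =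
      lam k • (Lᵀ * L) + ∑ i ∈ Finset.range k, (Ai i)ᵀ * Ai i := by
    rw [hD, hlamdef, hlamdef, sum_range_succ, sum_range_succ, add_smul]
    abel
  have hnormal : (lam k • (Lᵀ * L) + ∑ i ∈ Finset.range k, (Ai i)ᵀ * Ai i) *ᵥ xprev =
      ∑ i ∈ Finset.range k, (Ai i)ᵀ *ᵥ bi i := by
    rw [hxprev, hBprev, mulVec_mulVec, mul_nonsing_inv _ (hdet hprev), one_mulVec]
  have hupdate : (Ai k)ᵀ *ᵥ (Ai k *ᵥ xprev - bi k) + Lam k • (Lᵀ * L) *ᵥ xprev =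
      D *ᵥ xprev - (Ai k)ᵀ *ᵥ bi k := by
    rw [hD, add_mulVec, smul_mulVec, mulVec_sub, mulVec_mulVec]
    abel
  rw [hxcur, hupdate, hBcur, sub_inv_mulVec_sub (hdet hcur), hsplit, hnormal,
    ← sum_range_succ (fun i ↦ (Ai i)ᵀ *ᵥ bi i)]
end

section
/- Suppose in random cyclic sampling of the sampled Tikhonov method the parameters satisfy (M/k)·Σ_{i=1}^{k}Λ_i = λ for all k that are multiples of M (e.g. Λ_i = λ/M for all i), with λ > 0. Then for every epoch j, x_{jM} = (AᵀA + λLᵀL)^{-1}Aᵀb, i.e. the iterate equals the exact Tikhonov solution x(λ) after every epoch. -/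
open Matrix Finset

/-!
With `S k = λ_k LᵀL + ∑_{i<k} A_{τ i}ᵀ A_{τ i}`, every step of the sampled Tikhonov method is a
recursive least-squares update, so it preserves the normal equations
`S k x_k = ∑_{i<k} A_{τ i}ᵀ b_{τ i}`; these hold for any `x_0` because `S 0 = 0`.
After `j` epochs each block has been used exactly `j` times, so `∑ W_i W_iᵀ = I` turns the
sums into `j AᵀA` and `j Aᵀb`, while the parameter condition gives `λ_{jM} = j λ`.
Dividing by `j` leaves the normal equations `(AᵀA + λ LᵀL) x = Aᵀb` of Tikhonov regularization.
-/

namespace Matrix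

variable {m n p ι K : Type*}

section Frame

variable [CommSemiring K] [Fintype ι] [Fintype m] [DecidableEq m] [Fintype p]
  {W : ι → Matrix m p K}

theorem sum_transpose_mul_transpose_mul_self (hW : ∑ i, W i * (W i)ᵀ = 1) (A : Matrix m n K) :
    ∑ i, ((W i)ᵀ * A)ᵀ * ((W i)ᵀ * A) = Aᵀ * A := by
  simp_rw [transpose_mul, transpose_transpose, Matrix.mul_assoc, ← Matrix.mul_assoc (W _)]
  rw [← Matrix.mul_sum, ← Matrix.sum_mul, hW, Matrix.one_mul]

theorem sum_transpose_mul_mulVec_transpose_mulVec [Fintype n] (hW : ∑ i, W i * (W i)ᵀ = 1)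
    (A : Matrix m n K) (b : m → K) :
    ∑ i, ((W i)ᵀ * A)ᵀ *ᵥ ((W i)ᵀ *ᵥ b) = Aᵀ *ᵥ b := by
  simp_rw [transpose_mul, transpose_transpose, mulVec_mulVec, Matrix.mul_assoc]
  rw [← sum_mulVec, ← Matrix.mul_sum, hW, Matrix.mul_one]

end Frame

variable [Fintype n]

theorem mulVec_injective_of_rank_eq_card_s7 [Field K] {A : Matrix m n K}
    (hA : A.rank = Fintype.card n) : Function.Injective A.mulVec := by
  have hker : Module.finrank K (LinearMap.ker A.mulVecLin) = 0 := by
    have := LinearMap.finrank_range_add_finrank_ker A.mulVecLin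
    rw [Module.finrank_fintype_fun_eq_card] at this
    unfold Matrix.rank at hA
    omega
  rw [← Matrix.coe_mulVecLin, ← LinearMap.ker_eq_bot]
  exact Submodule.finrank_eq_zero.mp hker

theorem posDef_transpose_mul_self_of_rank_eq_card [Fintype m] {A : Matrix m n ℝ}
    (hA : A.rank = Fintype.card n) : (Aᵀ * A).PosDef := by
  simpa using PosDef.conjTranspose_mul_self A (mulVec_injective_of_rank_eq_card_s7 hA)

theorem PosDef.smul_add_sum_transpose_mul_self [Fintype p] {G : Matrix n n ℝ} (hG : G.PosDef)
    {c : ℝ} (hc : 0 < c) (a : ι → Matrix p n ℝ) (s : Finset ι) :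
    (c • G + ∑ i ∈ s, (a i)ᵀ * a i).PosDef :=
  (hG.smul hc).add_posSemidef <| posSemidef_sum s fun i _ => by
    simpa using posSemidef_conjTranspose_mul_self (a i)

variable [DecidableEq n] [Field K]

theorem add_mulVec_sub_inv_mulVec {S D : Matrix n n K} (hSD : IsUnit (S + D).det)
    (x r : n → K) : (S + D) *ᵥ (x - (S + D)⁻¹ *ᵥ (D *ᵥ x - r)) = S *ᵥ x + r := by
  rw [mulVec_sub, mulVec_mulVec, mul_nonsing_inv _ hSD, one_mulVec, add_mulVec]
  abel

theorem mulVec_eq_add_sum_of_recursive_update {S D : ℕ → Matrix n n K} {x r : ℕ → n → K}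
    (hS : ∀ k, S (k + 1) = S k + D k) (hunit : ∀ k, IsUnit (S (k + 1)).det)
    (hx : ∀ k, x (k + 1) = x k - (S (k + 1))⁻¹ *ᵥ (D k *ᵥ x k - r k)) (k : ℕ) :
    S k *ᵥ x k = S 0 *ᵥ x 0 + ∑ i ∈ range k, r i := by
  induction k with
  | zero => simp
  | succ k ih =>
    have hunit' := hunit k
    rw [hS] at hunit' ⊢
    rw [hx, hS, add_mulVec_sub_inv_mulVec hunit', ih, sum_range_succ, add_assoc]

theorem eq_nonsing_inv_mulVec_of_smul {C : Matrix n n K} {c : K} (hc : c ≠ 0)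
    (hC : IsUnit (c • C).det) {x v : n → K} (h : (c • C) *ᵥ x = c • v) : x = C⁻¹ *ᵥ v := by
  rw [smul_mulVec] at h
  have hCx : C *ᵥ x = v := smul_right_injective _ hc h
  rw [det_smul] at hC
  rw [← hCx, mulVec_mulVec, nonsing_inv_mul _ (isUnit_of_mul_isUnit_right hC), one_mulVec]

end Matrix

theorem Finset.sum_range_mul_comp_of_bijective {α β : Type*} [Fintype α] [AddCommMonoid β]
    {M : ℕ} {τ : ℕ → α} (hτ : ∀ j, Function.Bijective fun t : Fin M => τ (j * M + t))
    (g : α → β) (j : ℕ) : ∑ i ∈ range (j * M), g (τ i) = j • ∑ a, g a := by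
  induction j with
  | zero => simp
  | succ j ih =>
    rw [add_mul, one_mul, sum_range_add, ih, succ_nsmul, ← Fin.sum_univ_eq_sum_range,
      (hτ j).sum_comp g]

theorem sTik_normal_equations {n p : Type*} [Fintype n] [DecidableEq n] [Fintype p]
    {G : Matrix n n ℝ} (hG : G.PosDef) {a : ℕ → Matrix p n ℝ} {c : ℕ → p → ℝ}
    {Lam lam : ℕ → ℝ} (hlam : ∀ k, lam k = ∑ i ∈ range k, Lam i) (hpos : ∀ k, 0 < k → 0 < lam k)
    {x : ℕ → n → ℝ}
    (hx : ∀ k, x (k + 1) = x k - (lam (k + 1) • G + ∑ i ∈ range (k + 1), (a i)ᵀ * a i)⁻¹ *ᵥ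
      ((a k)ᵀ *ᵥ (a k *ᵥ x k - c k) + Lam k • G *ᵥ x k)) (k : ℕ) :
    (lam k • G + ∑ i ∈ range k, (a i)ᵀ * a i) *ᵥ x k = ∑ i ∈ range k, (a i)ᵀ *ᵥ c i := by
  have := mulVec_eq_add_sum_of_recursive_update
    (S := fun k => lam k • G + ∑ i ∈ range k, (a i)ᵀ * a i)
    (D := fun k => Lam k • G + (a k)ᵀ * a k) (r := fun k => (a k)ᵀ *ᵥ c k) (x := x)
    (fun k => by simp only [hlam, sum_range_succ, add_smul]; abel)
    (fun k => (isUnit_iff_isUnit_det _).mp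
      (hG.smul_add_sum_transpose_mul_self (hpos _ k.succ_pos) _ _).isUnit)
    (fun k => by
      rw [hx]
      congr 2
      simp only [add_mulVec, smul_mulVec, mulVec_mulVec, mulVec_sub]
      abel) k
  simpa [hlam] using this

theorem sTik_epoch_exact_Tikhonov_general
    {m n s ℓ M : ℕ} (hM : 0 < M)
    (A : Matrix (Fin m) (Fin n) ℝ) (b : Fin m → ℝ)
    (L : Matrix (Fin s) (Fin n) ℝ) (hL : L.rank = n)
    (W : Fin M → Matrix (Fin m) (Fin ℓ) ℝ)
    (hW : ∑ i, W i * (W i)ᵀ = (1 : Matrix (Fin m) (Fin m) ℝ))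
    (τ : ℕ → Fin M)
    (hτ : ∀ j : ℕ, Function.Bijective (fun t : Fin M => τ (j * M + (t : ℕ))))
    (Ai : Fin M → Matrix (Fin ℓ) (Fin n) ℝ) (hAi : ∀ i, Ai i = (W i)ᵀ * A)
    (bi : Fin M → Fin ℓ → ℝ) (hbi : ∀ i, bi i = (W i)ᵀ.mulVec b)
    (lam0 : ℝ)
    (Lam : ℕ → ℝ) (lam : ℕ → ℝ)
    (hlamdef : ∀ j, lam j = ∑ i ∈ Finset.range j, Lam i)
    (hpos : ∀ j, 0 < j → 0 < lam j)
    (hconst : ∀ j : ℕ, 0 < j → ((M : ℝ) / ((j * M : ℕ) : ℝ)) * lam (j * M) = lam0)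
    (B : ℕ → Matrix (Fin n) (Fin n) ℝ)
    (hB : ∀ j, B j = (lam j • (Lᵀ * L) + ∑ i ∈ Finset.range j, (Ai (τ i))ᵀ * Ai (τ i))⁻¹)
    (x : ℕ → Fin n → ℝ)
    (hx : ∀ k, x (k + 1) =
      x k - (B (k + 1)).mulVec ((Ai (τ k))ᵀ.mulVec ((Ai (τ k)).mulVec (x k) - bi (τ k))
        + Lam k • (Lᵀ * L).mulVec (x k))) :
    ∀ j : ℕ, 0 < j →
      x (j * M) = (Aᵀ * A + lam0 • (Lᵀ * L))⁻¹.mulVec (Aᵀ.mulVec b) := by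
  intro j hj
  have hG : (Lᵀ * L).PosDef := posDef_transpose_mul_self_of_rank_eq_card (by simpa)
  have hnormal := sTik_normal_equations hG hlamdef hpos (a := fun k => Ai (τ k))
    (c := fun k => bi (τ k)) (x := x) (fun k => by rw [hx, hB]) (j * M)
  have hlam : lam (j * M) = j * lam0 := by
    rw [← hconst j hj]
    field_simp
    push_cast
    ring
  have hS_epoch : lam (j * M) • (Lᵀ * L) + ∑ i ∈ range (j * M), (Ai (τ i))ᵀ * Ai (τ i) =
      (j : ℝ) • (Aᵀ * A + lam0 • (Lᵀ * L)) := by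
    rw [hlam, sum_range_mul_comp_of_bijective hτ (fun i => (Ai i)ᵀ * Ai i),
      ← Nat.cast_smul_eq_nsmul ℝ]
    simp only [hAi, sum_transpose_mul_transpose_mul_self hW]
    rw [smul_add, smul_smul, add_comm]
  have hrhs_epoch : ∑ i ∈ range (j * M), (Ai (τ i))ᵀ *ᵥ bi (τ i) = (j : ℝ) • (Aᵀ *ᵥ b) := by
    rw [sum_range_mul_comp_of_bijective hτ (fun i => (Ai i)ᵀ *ᵥ bi i),
      ← Nat.cast_smul_eq_nsmul ℝ]
    simp only [hAi, hbi, sum_transpose_mul_mulVec_transpose_mulVec hW]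
  rw [hS_epoch, hrhs_epoch] at hnormal
  refine eq_nonsing_inv_mulVec_of_smul (by positivity) ?_ hnormal
  rw [← hS_epoch, ← isUnit_iff_isUnit_det]
  exact (hG.smul_add_sum_transpose_mul_self (hpos _ (Nat.mul_pos hj hM)) _ _).isUnit

/-- if in random cyclic sampling the parameters satisfy
`(M/k)·Σ_{i=1}^k Λ_i = λ` at every epoch boundary `k = jM` (e.g. `Λ_i = λ/M`), then after
every epoch the sampled Tikhonov iterate equals the exact Tikhonov solution `x(λ)`. -/
theorem sTik_epoch_exact_Tikhonov
    {m n s ℓ M : ℕ} (hM : 0 < M)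
    (A : Matrix (Fin m) (Fin n) ℝ) (b : Fin m → ℝ)
    (L : Matrix (Fin s) (Fin n) ℝ) (hL : L.rank = n)
    (W : Fin M → Matrix (Fin m) (Fin ℓ) ℝ)
    (hW : ∑ i, W i * (W i)ᵀ = (1 : Matrix (Fin m) (Fin m) ℝ))
    (τ : ℕ → Fin M)
    (hτ : ∀ j : ℕ, Function.Bijective (fun t : Fin M => τ (j * M + (t : ℕ))))
    (Ai : Fin M → Matrix (Fin ℓ) (Fin n) ℝ) (hAi : ∀ i, Ai i = (W i)ᵀ * A)
    (bi : Fin M → Fin ℓ → ℝ) (hbi : ∀ i, bi i = (W i)ᵀ.mulVec b)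
    (lam0 : ℝ) (hlam0 : 0 < lam0)
    (Lam : ℕ → ℝ) (lam : ℕ → ℝ)
    (hlamdef : ∀ j, lam j = ∑ i ∈ Finset.range j, Lam i)
    (hpos : ∀ j, 0 < j → 0 < lam j)
    (hconst : ∀ j : ℕ, 0 < j → ((M : ℝ) / ((j * M : ℕ) : ℝ)) * lam (j * M) = lam0)
    (B : ℕ → Matrix (Fin n) (Fin n) ℝ)
    (hB : ∀ j, B j = (lam j • (Lᵀ * L) + ∑ i ∈ Finset.range j, (Ai (τ i))ᵀ * Ai (τ i))⁻¹)
    (x0 : Fin n → ℝ)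
    (x : ℕ → Fin n → ℝ) (hx0 : x 0 = x0)
    (hx : ∀ k, x (k + 1) =
      x k - (B (k + 1)).mulVec ((Ai (τ k))ᵀ.mulVec ((Ai (τ k)).mulVec (x k) - bi (τ k))
        + Lam k • (Lᵀ * L).mulVec (x k))) :
    ∀ j : ℕ, 0 < j →
      x (j * M) = (Aᵀ * A + lam0 • (Lᵀ * L))⁻¹.mulVec (Aᵀ.mulVec b) :=
  sTik_epoch_exact_Tikhonov_general hM A b L hL W hW τ hτ Ai hAi bi hbi lam0 Lam lam hlamdef hpos
    hconst B hB x hx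
end

section
/- Let A ∈ ℝ^{m×n}, b ∈ ℝ^m, L ∈ ℝ^{s×n} with full column rank, and {W_i}_{i=1}^{M} with Σ_{i=1}^{M} W_i W_iᵀ = I_m. Let τ(1), τ(2), … be i.i.d. uniform on {1,…,M}. Fix λ > 0 and define y_k = (λLᵀL + Σ_{i=1}^{k} A_{τ(i)}ᵀA_{τ(i)})^{-1}(Σ_{i=1}^{k} A_{τ(i)}ᵀ b_{τ(i)} + λLᵀL y_0). If A has full column rank, then y_k → (AᵀA)^{-1}Aᵀb almost surely as k → ∞. -/
/-!
Since `∑ Wᵢ Wᵢᵀ = I`, the i.i.d. summands `A_{τ(i)}ᵀ A_{τ(i)}` and `A_{τ(i)}ᵀ b_{τ(i)}` have means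
`AᵀA / M` and `Aᵀb / M`. Dividing the normal equations of `y_k` by `k`, the strong law of large
numbers makes the matrix converge almost surely to `AᵀA / M`, which is invertible, and the right
hand side to `Aᵀb / M`; the regularization terms vanish after division by `k`. Continuity of
matrix inversion at invertible matrices then gives `y_k → (AᵀA)⁻¹Aᵀb`.
-/

open Matrix Finset Filter MeasureTheory ProbabilityTheory Topology

namespace Matrix

variable {ι m n l R 𝕜 : Type*}

theorem isUnit_of_rank_eq_card [Fintype n] [DecidableEq n] [Field 𝕜] {A : Matrix n n 𝕜}
    (h : A.rank = Fintype.card n) : IsUnit A := by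
  rw [← mulVec_surjective_iff_isUnit]
  exact LinearMap.range_eq_top.mp
    (Submodule.eq_top_of_finrank_eq (h.trans (Module.finrank_fintype_fun_eq_card 𝕜).symm))

/-- Also for singular `B`, where both inverses are `0`. -/
theorem inv_smul_of_ne_zero [Fintype n] [DecidableEq n] [Field 𝕜] {r : 𝕜} (hr : r ≠ 0)
    (B : Matrix n n 𝕜) : (r • B)⁻¹ = r⁻¹ • B⁻¹ := by
  by_cases hB : IsUnit B.det
  · exact inv_smul' B (Units.mk0 r hr) hB
  · have hrB : ¬IsUnit (r • B).det := by
      rwa [det_smul, IsUnit.mul_iff, and_iff_right (isUnit_iff_ne_zero.mpr (pow_ne_zero _ hr))]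
    rw [nonsing_inv_apply_not_isUnit _ hB, nonsing_inv_apply_not_isUnit _ hrB, smul_zero]

theorem inv_smul_mulVec_smul [Fintype n] [DecidableEq n] [Field 𝕜] {r : 𝕜} (hr : r ≠ 0)
    (B : Matrix n n 𝕜) (v : n → 𝕜) : (r • B)⁻¹ *ᵥ (r • v) = B⁻¹ *ᵥ v := by
  rw [inv_smul_of_ne_zero hr, smul_mulVec, mulVec_smul, smul_smul, inv_mul_cancel₀ hr, one_smul]

theorem tendsto_inv_mulVec_of_tendsto_smul [Fintype n] [DecidableEq n] [Field 𝕜]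
    [TopologicalSpace 𝕜] [IsTopologicalDivisionRing 𝕜] {f : Filter ι} {r : ι → 𝕜}
    {B : ι → Matrix n n 𝕜} {v : ι → n → 𝕜} {P : Matrix n n 𝕜} {w : n → 𝕜} (hr : ∀ᶠ i in f, r i ≠ 0)
    (hB : Tendsto (fun i => r i • B i) f (𝓝 P)) (hP : IsUnit P.det)
    (hv : Tendsto (fun i => r i • v i) f (𝓝 w)) :
    Tendsto (fun i => (B i)⁻¹ *ᵥ v i) f (𝓝 (P⁻¹ *ᵥ w)) := by
  have hinv : ContinuousAt Inv.inv P :=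
    continuousAt_matrix_inv P (by rw [Ring.inverse_eq_inv']; exact continuousAt_inv₀ hP.ne_zero)
  have hmulVec : Continuous fun p : Matrix n n 𝕜 × (n → 𝕜) => p.1 *ᵥ p.2 :=
    continuous_fst.matrix_mulVec continuous_snd
  refine ((hmulVec.tendsto _).comp ((hinv.tendsto.comp hB).prodMk_nhds hv)).congr' ?_
  filter_upwards [hr] with i hri
  exact inv_smul_mulVec_smul hri (B i) (v i)

theorem sum_transpose_mul_self_of_sum_mul_transpose_eq_one [Fintype ι] [Fintype m]
    [DecidableEq m] [Fintype l] [CommRing R] {W : ι → Matrix m l R}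
    (hW : ∑ i, W i * (W i)ᵀ = 1) (A : Matrix m n R) :
    ∑ i, ((W i)ᵀ * A)ᵀ * ((W i)ᵀ * A) = Aᵀ * A := by
  calc ∑ i, ((W i)ᵀ * A)ᵀ * ((W i)ᵀ * A) = Aᵀ * (∑ i, W i * (W i)ᵀ) * A := by
        simp only [transpose_mul, transpose_transpose, Matrix.mul_sum, Matrix.sum_mul,
          Matrix.mul_assoc]
    _ = Aᵀ * A := by rw [hW, Matrix.mul_one]

theorem sum_transpose_mulVec_of_sum_mul_transpose_eq_one [Fintype ι] [Fintype m]
    [DecidableEq m] [Fintype l] [CommRing R] {W : ι → Matrix m l R}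
    (hW : ∑ i, W i * (W i)ᵀ = 1) (A : Matrix m n R) (b : m → R) :
    ∑ i, ((W i)ᵀ * A)ᵀ *ᵥ ((W i)ᵀ *ᵥ b) = Aᵀ *ᵥ b := by
  calc ∑ i, ((W i)ᵀ * A)ᵀ *ᵥ ((W i)ᵀ *ᵥ b) = (Aᵀ * ∑ i, W i * (W i)ᵀ) *ᵥ b := by
        simp only [transpose_mul, transpose_transpose, mulVec_mulVec, Matrix.mul_sum,
          sum_mulVec, Matrix.mul_assoc]
    _ = Aᵀ *ᵥ b := by rw [hW, Matrix.mul_one]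

end Matrix

theorem ProbabilityTheory.identDistrib_of_measure_preimage_singleton
    {α Ω Ω' : Type*} [MeasurableSpace α] [MeasurableSingletonClass α] [Countable α]
    [MeasurableSpace Ω] [MeasurableSpace Ω'] {μ : Measure Ω} {ν : Measure Ω'}
    {X : Ω → α} {Y : Ω' → α} (hX : Measurable X) (hY : Measurable Y)
    (h : ∀ a, μ (X ⁻¹' {a}) = ν (Y ⁻¹' {a})) : IdentDistrib X Y μ ν where
  aemeasurable_fst := hX.aemeasurable
  aemeasurable_snd := hY.aemeasurable
  map_eq := Measure.ext_iff_singleton.mpr fun a => by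
    rw [Measure.map_apply hX (measurableSet_singleton a),
      Measure.map_apply hY (measurableSet_singleton a), h]

theorem MeasureTheory.integral_comp_of_measure_preimage_singleton_eq
    {Ω E : Type*} [MeasurableSpace Ω] {μ : Measure Ω} [IsFiniteMeasure μ]
    [NormedAddCommGroup E] [NormedSpace ℝ E] [CompleteSpace E]
    {M : ℕ} {τ : Ω → Fin M} (hτ : Measurable τ) (hunif : ∀ i, μ (τ ⁻¹' {i}) = (M : ENNReal)⁻¹)
    (g : Fin M → E) :
    ∫ ω, g (τ ω) ∂μ = (M : ℝ)⁻¹ • ∑ i, g i := by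
  have hmap : ∀ i, (μ.map τ).real {i} = (M : ℝ)⁻¹ := fun i => by
    rw [Measure.real, Measure.map_apply hτ (measurableSet_singleton i), hunif,
      ENNReal.toReal_inv, ENNReal.toReal_natCast]
  rw [← integral_map hτ.aemeasurable .of_discrete, integral_fintype .of_finite]
  simp only [hmap, Finset.smul_sum]

theorem ProbabilityTheory.ae_tendsto_smul_sum_comp_of_iIndepFun_uniform
    {Ω E : Type*} [MeasurableSpace Ω] {μ : Measure Ω} [IsProbabilityMeasure μ]
    [NormedAddCommGroup E] [NormedSpace ℝ E] [CompleteSpace E] [MeasurableSpace E] [BorelSpace E]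
    [SecondCountableTopology E] {M : ℕ} {τ : ℕ → Ω → Fin M} (hmeas : ∀ k, Measurable (τ k))
    (hindep : iIndepFun τ μ)
    (hunif : ∀ k, ∀ i : Fin M, μ (τ k ⁻¹' {i}) = (M : ENNReal)⁻¹) (g : Fin M → E) :
    ∀ᵐ ω ∂μ, Tendsto (fun k : ℕ => (k : ℝ)⁻¹ • ∑ i ∈ range k, g (τ i ω)) atTop
      (𝓝 ((M : ℝ)⁻¹ • ∑ i, g i)) := by
  have hg : Measurable g := measurable_of_countable g
  have hint : Integrable (g ∘ τ 0) μ := Integrable.comp_measurable .of_finite (hmeas 0)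
  have hident : ∀ k, IdentDistrib (g ∘ τ k) (g ∘ τ 0) μ μ := fun k =>
    (identDistrib_of_measure_preimage_singleton (hmeas k) (hmeas 0)
      fun i => by rw [hunif, hunif]).comp hg
  have hpair : Pairwise (Function.onFun (· ⟂ᵢ[μ] ·) fun k => g ∘ τ k) := fun i j hij =>
    (hindep.indepFun hij).comp hg hg
  simpa only [Function.comp_apply, integral_comp_of_measure_preimage_singleton_eq (hmeas 0)
    (hunif 0)] using strong_law_ae (fun k => g ∘ τ k) hint hpair hident

theorem tendsto_inv_natCast_smul_add_const {E : Type*} [AddCommGroup E] [TopologicalSpace E]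
    [Module ℝ E] [ContinuousSMul ℝ E] [ContinuousAdd E] {x : ℕ → E} {v : E} (c : E)
    (h : Tendsto (fun k : ℕ => (k : ℝ)⁻¹ • x k) atTop (𝓝 v)) :
    Tendsto (fun k : ℕ => (k : ℝ)⁻¹ • (x k + c)) atTop (𝓝 v) := by
  simpa only [smul_add, zero_smul, add_zero] using
    h.add ((tendsto_inv_atTop_nhds_zero_nat (𝕜 := ℝ)).smul_const c)

theorem rrls_random_sampling_as_convergence_general
    {m n s ℓ M : ℕ} (hM : 0 < M)
    (A : Matrix (Fin m) (Fin n) ℝ) (hA : A.rank = n) (b : Fin m → ℝ)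
    (L : Matrix (Fin s) (Fin n) ℝ)
    (W : Fin M → Matrix (Fin m) (Fin ℓ) ℝ)
    (hW : ∑ i, W i * (W i)ᵀ = (1 : Matrix (Fin m) (Fin m) ℝ))
    (Ai : Fin M → Matrix (Fin ℓ) (Fin n) ℝ) (hAi : ∀ i, Ai i = (W i)ᵀ * A)
    (bi : Fin M → Fin ℓ → ℝ) (hbi : ∀ i, bi i = (W i)ᵀ.mulVec b)
    (lam : ℝ) (y0 : Fin n → ℝ)
    {Ω : Type*} [MeasurableSpace Ω] (μ : Measure Ω) [IsProbabilityMeasure μ]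
    (τ : ℕ → Ω → Fin M) (hmeas : ∀ k, Measurable (τ k))
    (hindep : iIndepFun τ μ)
    (hunif : ∀ k, ∀ i : Fin M, μ (τ k ⁻¹' {i}) = (M : ENNReal)⁻¹)
    (y : ℕ → Ω → Fin n → ℝ)
    (hy : ∀ k ω, y k ω =
      (lam • (Lᵀ * L) + ∑ i ∈ Finset.range k, (Ai (τ i ω))ᵀ * Ai (τ i ω))⁻¹.mulVec
        ((∑ i ∈ Finset.range k, (Ai (τ i ω))ᵀ.mulVec (bi (τ i ω)))
          + lam • (Lᵀ * L).mulVec y0)) :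
    ∀ᵐ ω ∂μ, Tendsto (fun k => y k ω) atTop
      (nhds ((Aᵀ * A)⁻¹.mulVec (Aᵀ.mulVec b))) := by
  have hMinv : (M : ℝ)⁻¹ ≠ 0 := inv_ne_zero (Nat.cast_ne_zero.mpr hM.ne')
  have hgram : ∑ i, (Ai i)ᵀ * Ai i = Aᵀ * A := by
    simpa only [hAi] using sum_transpose_mul_self_of_sum_mul_transpose_eq_one hW A
  have hrhs : ∑ i, (Ai i)ᵀ *ᵥ bi i = Aᵀ *ᵥ b := by
    simpa only [hAi, hbi] using sum_transpose_mulVec_of_sum_mul_transpose_eq_one hW A b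
  have hgramA : IsUnit (Aᵀ * A) :=
    isUnit_of_rank_eq_card (by rw [rank_transpose_mul_self, hA, Fintype.card_fin])
  have hdet : IsUnit ((M : ℝ)⁻¹ • (Aᵀ * A)).det := by
    rw [det_smul]
    exact (isUnit_iff_ne_zero.mpr (pow_ne_zero _ hMinv)).mul ((isUnit_iff_isUnit_det _).mp hgramA)
  -- `Matrix` has no norm or measurable structure of its own; its topology is that of
  -- `Fin n → Fin n → ℝ`, where the strong law applies.
  have hS := ae_tendsto_smul_sum_comp_of_iIndepFun_uniform (E := Fin n → Fin n → ℝ) hmeas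
    hindep hunif fun i => (Ai i)ᵀ * Ai i
  have hT := ae_tendsto_smul_sum_comp_of_iIndepFun_uniform hmeas hindep hunif
    fun i => (Ai i)ᵀ *ᵥ bi i
  filter_upwards [hS, hT] with ω hSω hTω
  rw [hrhs] at hTω
  have hSω' : Tendsto (fun k : ℕ => (k : ℝ)⁻¹ • ∑ i ∈ range k, (Ai (τ i ω))ᵀ * Ai (τ i ω))
      atTop (𝓝 ((M : ℝ)⁻¹ • (Aᵀ * A))) := by
    rw [← hgram]; exact hSω
  have hlim := tendsto_inv_mulVec_of_tendsto_smul
    ((eventually_ne_atTop 0).mono fun k hk => inv_ne_zero (Nat.cast_ne_zero.mpr hk))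
    (by simpa only [add_comm] using tendsto_inv_natCast_smul_add_const (lam • (Lᵀ * L)) hSω')
    hdet (tendsto_inv_natCast_smul_add_const (lam • (Lᵀ * L) *ᵥ y0) hTω)
  rw [inv_smul_mulVec_smul hMinv] at hlim
  simpa only [hy] using hlim

/-- with i.i.d. uniform sampling indices, the rrls iterates converge almost
surely to the unregularized least-squares solution `(AᵀA)⁻¹Aᵀb` when `A` has full column
rank. -/
theorem rrls_random_sampling_as_convergence
    {m n s ℓ M : ℕ} (hM : 0 < M)
    (A : Matrix (Fin m) (Fin n) ℝ) (hA : A.rank = n) (b : Fin m → ℝ)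
    (L : Matrix (Fin s) (Fin n) ℝ) (hL : L.rank = n)
    (W : Fin M → Matrix (Fin m) (Fin ℓ) ℝ)
    (hW : ∑ i, W i * (W i)ᵀ = (1 : Matrix (Fin m) (Fin m) ℝ))
    (Ai : Fin M → Matrix (Fin ℓ) (Fin n) ℝ) (hAi : ∀ i, Ai i = (W i)ᵀ * A)
    (bi : Fin M → Fin ℓ → ℝ) (hbi : ∀ i, bi i = (W i)ᵀ.mulVec b)
    (lam : ℝ) (hlam : 0 < lam) (y0 : Fin n → ℝ)
    {Ω : Type*} [MeasurableSpace Ω] (μ : Measure Ω) [IsProbabilityMeasure μ]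
    (τ : ℕ → Ω → Fin M) (hmeas : ∀ k, Measurable (τ k))
    (hindep : iIndepFun τ μ)
    (hunif : ∀ k, ∀ i : Fin M, μ (τ k ⁻¹' {i}) = (M : ENNReal)⁻¹)
    (y : ℕ → Ω → Fin n → ℝ)
    (hy : ∀ k ω, y k ω =
      (lam • (Lᵀ * L) + ∑ i ∈ Finset.range k, (Ai (τ i ω))ᵀ * Ai (τ i ω))⁻¹.mulVec
        ((∑ i ∈ Finset.range k, (Ai (τ i ω))ᵀ.mulVec (bi (τ i ω)))
          + lam • (Lᵀ * L).mulVec y0)) :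
    ∀ᵐ ω ∂μ, Tendsto (fun k => y k ω) atTop
      (nhds ((Aᵀ * A)⁻¹.mulVec (Aᵀ.mulVec b))) :=
  rrls_random_sampling_as_convergence_general hM A hA b L W hW Ai hAi bi hbi lam y0 μ τ hmeas hindep
    hunif y hy
end

section
/- With b = Ax_true + ε, E[ε] = 0, E[εεᵀ] = σ²I_m, and fixed matrices C ∈ ℝ^{n×m}, W ∈ ℝ^{m×ℓ}, the expected sampled residual satisfies E‖Wᵀ(ACb − b)‖² = ‖Wᵀ(AC − I_m)Ax_true‖² + σ²( tr(CᵀAᵀWWᵀAC) − 2 tr(WWᵀAC) + tr(WᵀW) ). Consequently, E‖Wᵀ(ACb − Ax_true)‖² = E‖Wᵀ(ACb − b)‖² + 2σ² tr(WWᵀAC) − σ² tr(WᵀW). -/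
open Matrix MeasureTheory

lemma expected_sq_norm {m ℓ : ℕ} {Ω : Type*} [MeasurableSpace Ω]
    (μ : Measure Ω) [IsProbabilityMeasure μ]
    (ε : Ω → Fin m → ℝ) (σ : ℝ)
    (hmean : ∀ i, ∫ ω, ε ω i ∂μ = 0)
    (hmeanInt : ∀ i, Integrable (fun ω => ε ω i) μ)
    (hcovInt : ∀ i j, Integrable (fun ω => ε ω i * ε ω j) μ)
    (hcov : ∀ i j, ∫ ω, ε ω i * ε ω j ∂μ = σ ^ 2 * (if i = j then 1 else 0))
    (N : Matrix (Fin ℓ) (Fin m) ℝ) (v : Fin ℓ → ℝ) :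
    ∫ ω, ∑ p, (v p + N.mulVec (ε ω) p) ^ 2 ∂μ
      = (∑ p, (v p) ^ 2) + σ ^ 2 * (Nᵀ * N).trace := by
  have hf : ∀ p, Integrable (fun ω => N.mulVec (ε ω) p) μ := by
    intro p
    simp only [Matrix.mulVec, dotProduct]
    exact integrable_finset_sum _ fun i _ => (hmeanInt i).const_mul _
  have hsq : ∀ p ω, (N.mulVec (ε ω) p) ^ 2
      = ∑ i, ∑ j, N p i * N p j * (ε ω i * ε ω j) := by
    intro p ω
    simp only [Matrix.mulVec, dotProduct, sq, Finset.sum_mul_sum]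
    exact Finset.sum_congr rfl fun i _ => Finset.sum_congr rfl fun j _ => by ring
  have hf2 : ∀ p, Integrable (fun ω => (N.mulVec (ε ω) p) ^ 2) μ := by
    intro p
    have h : (fun ω => (N.mulVec (ε ω) p) ^ 2)
        = fun ω => ∑ i, ∑ j, N p i * N p j * (ε ω i * ε ω j) := funext (hsq p)
    rw [h]
    exact integrable_finset_sum _ fun i _ =>
      integrable_finset_sum _ fun j _ => (hcovInt i j).const_mul _
  have hintf : ∀ p, ∫ ω, N.mulVec (ε ω) p ∂μ = 0 := by
    intro p
    simp only [Matrix.mulVec, dotProduct]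
    rw [integral_finset_sum _ fun i _ => (hmeanInt i).const_mul _]
    simp [integral_const_mul, hmean]
  have hintf2 : ∀ p, ∫ ω, (N.mulVec (ε ω) p) ^ 2 ∂μ = σ ^ 2 * ∑ i, N p i ^ 2 := by
    intro p
    simp only [hsq p]
    rw [integral_finset_sum _ fun i _ =>
      integrable_finset_sum _ fun j _ => (hcovInt i j).const_mul _]
    have : ∀ i : Fin m, ∫ ω, ∑ j, N p i * N p j * (ε ω i * ε ω j) ∂μ
        = ∑ j, N p i * N p j * (σ ^ 2 * (if i = j then 1 else 0)) := by
      intro i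
      rw [integral_finset_sum _ fun j _ => (hcovInt i j).const_mul _]
      exact Finset.sum_congr rfl fun j _ => by rw [integral_const_mul, hcov]
    simp only [this, mul_ite, mul_one, mul_zero, Finset.sum_ite_eq, Finset.mem_univ, if_true]
    rw [Finset.mul_sum]
    exact Finset.sum_congr rfl fun i _ => by ring
  have hexp : ∀ p, (fun ω => (v p + N.mulVec (ε ω) p) ^ 2)
      = fun ω => (v p ^ 2 + 2 * v p * N.mulVec (ε ω) p) + (N.mulVec (ε ω) p) ^ 2 :=
    fun p => funext fun ω => by ring
  have hintAll : ∀ p, Integrable (fun ω => (v p + N.mulVec (ε ω) p) ^ 2) μ := by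
    intro p
    rw [hexp p]
    exact ((integrable_const _).add ((hf p).const_mul _)).add (hf2 p)
  rw [integral_finset_sum _ fun p _ => hintAll p]
  have hper : ∀ p, ∫ ω, (v p + N.mulVec (ε ω) p) ^ 2 ∂μ
      = v p ^ 2 + σ ^ 2 * ∑ i, N p i ^ 2 := by
    intro p
    rw [hexp p]
    have e1 : ∫ ω, (v p ^ 2 + 2 * v p * N.mulVec (ε ω) p + (N.mulVec (ε ω) p) ^ 2) ∂μ
        = (∫ ω, (v p ^ 2 + 2 * v p * N.mulVec (ε ω) p) ∂μ)
          + ∫ ω, (N.mulVec (ε ω) p) ^ 2 ∂μ :=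
      integral_add ((integrable_const _).add ((hf p).const_mul _)) (hf2 p)
    have e2 : ∫ ω, (v p ^ 2 + 2 * v p * N.mulVec (ε ω) p) ∂μ
        = (∫ _ω : Ω, v p ^ 2 ∂μ) + ∫ ω, 2 * v p * N.mulVec (ε ω) p ∂μ :=
      integral_add (integrable_const _) ((hf p).const_mul _)
    rw [e1, e2, integral_const, integral_const_mul, hintf, hintf2]
    simp
  simp only [hper]
  rw [Finset.sum_add_distrib, ← Finset.mul_sum]
  have htr : (Nᵀ * N).trace = ∑ p, ∑ i, N p i ^ 2 := by
    rw [Matrix.trace]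
    simp only [Matrix.diag, Matrix.mul_apply, Matrix.transpose_apply, ← pow_two]
    exact Finset.sum_comm
  rw [htr]

/-- sampled residual identity underlying sUPRE: with `b = Ax_true + ε`,
`E[ε]=0`, `E[εεᵀ]=σ²I`, and fixed `C`, `W`,
`E‖Wᵀ(ACb − b)‖² = ‖Wᵀ(AC−I)Ax_true‖² + σ²(tr(CᵀAᵀWWᵀAC) − 2tr(WWᵀAC) + tr(WᵀW))`
and consequently
`E‖Wᵀ(ACb − Ax_true)‖² = E‖Wᵀ(ACb − b)‖² + 2σ² tr(WWᵀAC) − σ² tr(WᵀW)`. -/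
theorem sampled_residual_and_predictive_risk_identity
    {m n ℓ : ℕ}
    (A : Matrix (Fin m) (Fin n) ℝ) (xtrue : Fin n → ℝ)
    (C : Matrix (Fin n) (Fin m) ℝ) (W : Matrix (Fin m) (Fin ℓ) ℝ)
    {Ω : Type*} [MeasurableSpace Ω] (μ : Measure Ω) [IsProbabilityMeasure μ]
    (ε : Ω → Fin m → ℝ) (hε : Measurable ε)
    (b : Ω → Fin m → ℝ) (hb : ∀ ω, b ω = A.mulVec xtrue + ε ω)
    (σ : ℝ)
    (hmean : ∀ i, ∫ ω, ε ω i ∂μ = 0)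
    (hmeanInt : ∀ i, Integrable (fun ω => ε ω i) μ)
    (hcovInt : ∀ i j, Integrable (fun ω => ε ω i * ε ω j) μ)
    (hcov : ∀ i j, ∫ ω, ε ω i * ε ω j ∂μ = σ ^ 2 * (if i = j then 1 else 0)) :
    (∫ ω, ∑ p, ((Wᵀ.mulVec (A.mulVec (C.mulVec (b ω)) - b ω)) p) ^ 2 ∂μ
        = (∑ p, ((Wᵀ.mulVec ((A * C - 1).mulVec (A.mulVec xtrue))) p) ^ 2)
          + σ ^ 2 * ((Cᵀ * Aᵀ * W * Wᵀ * A * C).trace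
            - 2 * (W * Wᵀ * A * C).trace + (Wᵀ * W).trace)) ∧
      (∫ ω, ∑ p, ((Wᵀ.mulVec (A.mulVec (C.mulVec (b ω)) - A.mulVec xtrue)) p) ^ 2 ∂μ
        = (∫ ω, ∑ p, ((Wᵀ.mulVec (A.mulVec (C.mulVec (b ω)) - b ω)) p) ^ 2 ∂μ)
          + 2 * σ ^ 2 * (W * Wᵀ * A * C).trace - σ ^ 2 * (Wᵀ * W).trace) := by
  set v : Fin ℓ → ℝ := Wᵀ.mulVec ((A * C - 1).mulVec (A.mulVec xtrue)) with hv
  have key : ∀ u : Fin m → ℝ, A.mulVec (C.mulVec u) - u = (A * C - 1).mulVec u := by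
    intro u
    rw [Matrix.sub_mulVec, Matrix.one_mulVec, Matrix.mulVec_mulVec]
  have hvec1 : ∀ ω, A.mulVec (C.mulVec (b ω)) - b ω
      = (A * C - 1).mulVec (A.mulVec xtrue) + (A * C - 1).mulVec (ε ω) := by
    intro ω
    rw [hb ω, key, Matrix.mulVec_add]
  have hvec2 : ∀ ω, A.mulVec (C.mulVec (b ω)) - A.mulVec xtrue
      = (A * C - 1).mulVec (A.mulVec xtrue) + (A * C).mulVec (ε ω) := by
    intro ω
    rw [hb ω]
    have step : A.mulVec (C.mulVec (A.mulVec xtrue + ε ω)) - A.mulVec xtrue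
        = (A.mulVec (C.mulVec (A.mulVec xtrue + ε ω)) - (A.mulVec xtrue + ε ω)) + ε ω := by
      abel
    rw [step, key, Matrix.mulVec_add]
    simp only [Matrix.sub_mulVec, Matrix.one_mulVec]
    abel
  have hWmul : ∀ ω, Wᵀ.mulVec ((A * C - 1).mulVec (ε ω))
      = (Wᵀ * (A * C - 1)).mulVec (ε ω) := fun ω => Matrix.mulVec_mulVec ..
  have hWmul2 : ∀ ω, Wᵀ.mulVec ((A * C).mulVec (ε ω))
      = (Wᵀ * (A * C)).mulVec (ε ω) := fun ω => Matrix.mulVec_mulVec ..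
  have F1 : ∀ ω, ∑ p, ((Wᵀ.mulVec (A.mulVec (C.mulVec (b ω)) - b ω)) p) ^ 2
      = ∑ p, (v p + (Wᵀ * (A * C - 1)).mulVec (ε ω) p) ^ 2 := by
    intro ω
    rw [hvec1 ω, Matrix.mulVec_add, hWmul ω]
    rfl
  have F2 : ∀ ω, ∑ p, ((Wᵀ.mulVec (A.mulVec (C.mulVec (b ω)) - A.mulVec xtrue)) p) ^ 2
      = ∑ p, (v p + (Wᵀ * (A * C)).mulVec (ε ω) p) ^ 2 := by
    intro ω
    rw [hvec2 ω, Matrix.mulVec_add, hWmul2 ω]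
    rfl
  have E1 : ∫ ω, ∑ p, ((Wᵀ.mulVec (A.mulVec (C.mulVec (b ω)) - b ω)) p) ^ 2 ∂μ
      = (∑ p, (v p) ^ 2)
        + σ ^ 2 * ((Wᵀ * (A * C - 1))ᵀ * (Wᵀ * (A * C - 1))).trace := by
    simp only [F1]
    exact expected_sq_norm μ ε σ hmean hmeanInt hcovInt hcov _ v
  have E2 : ∫ ω, ∑ p, ((Wᵀ.mulVec (A.mulVec (C.mulVec (b ω)) - A.mulVec xtrue)) p) ^ 2 ∂μ
      = (∑ p, (v p) ^ 2)
        + σ ^ 2 * ((Wᵀ * (A * C))ᵀ * (Wᵀ * (A * C))).trace := by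
    simp only [F2]
    exact expected_sq_norm μ ε σ hmean hmeanInt hcovInt hcov _ v
  have T1 : ((Wᵀ * (A * C - 1))ᵀ * (Wᵀ * (A * C - 1))).trace
      = (Cᵀ * Aᵀ * W * Wᵀ * A * C).trace - 2 * (W * Wᵀ * A * C).trace
        + (Wᵀ * W).trace := by
    have hm : (Wᵀ * (A * C - 1))ᵀ * (Wᵀ * (A * C - 1))
        = Cᵀ * Aᵀ * W * Wᵀ * A * C - Cᵀ * Aᵀ * W * Wᵀ - W * Wᵀ * A * C + W * Wᵀ := by
      simp only [Matrix.transpose_mul, Matrix.transpose_sub, Matrix.transpose_one,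
        Matrix.transpose_transpose, Matrix.mul_sub, Matrix.sub_mul, Matrix.mul_one,
        Matrix.one_mul, Matrix.mul_assoc]
      abel
    rw [hm, Matrix.trace_add, Matrix.trace_sub, Matrix.trace_sub]
    have h1 : (Cᵀ * Aᵀ * W * Wᵀ).trace = (W * Wᵀ * A * C).trace := by
      rw [← Matrix.trace_transpose (Cᵀ * Aᵀ * W * Wᵀ)]
      congr 1
      simp only [Matrix.transpose_mul, Matrix.transpose_transpose, Matrix.mul_assoc]
    have h2 : (W * Wᵀ).trace = (Wᵀ * W).trace := Matrix.trace_mul_comm W Wᵀ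
    rw [h1, h2]
    ring
  have T2 : ((Wᵀ * (A * C))ᵀ * (Wᵀ * (A * C))).trace
      = (Cᵀ * Aᵀ * W * Wᵀ * A * C).trace := by
    congr 1
    simp only [Matrix.transpose_mul, Matrix.transpose_transpose, Matrix.mul_assoc]
  constructor
  · rw [E1, T1]
  · rw [E2, E1, T1, T2]
    ring
end

section
/- Leave-one-out identity for sampled cross validation: let B ∈ ℝ^{n×n} be symmetric positive definite, G ∈ ℝ^{ℓ×n}, g ∈ ℝ^n, c ∈ ℝ^ℓ, and for j ∈ {1,…,ℓ} set a_j = Gᵀe_j, t_jj = e_jᵀ G B Gᵀ e_j, and assume t_jj ≠ 1. Define x = B(g + Gᵀc) and x_[j] = (B^{-1} − a_j a_jᵀ)^{-1}(g + Gᵀc − a_j e_jᵀ c). Then e_jᵀ c − e_jᵀ G x_[j] = (1/(1 − t_jj)) e_jᵀ(c − G x). -/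
open Matrix

/-!
With `M = B⁻¹ - a aᵀ`, the equation `M y = w` rearranges to `y = B (w + (aᵀy) a)`;
pairing with `a` gives the scalar equation `(aᵀy)(1 - aᵀBa) = aᵀBw`. For `w = 0` it shows
that `M` is injective, hence invertible, and for `y = M⁻¹w` it evaluates `aᵀy`, which is all
the residual `c_j - aᵀx_[j]` depends on.
-/

namespace Matrix

variable {m K : Type*} [Fintype m] [DecidableEq m] [Field K]
  {B : Matrix m m K} {u v y w : m → K}

theorem eq_mulVec_add_of_inv_sub_vecMulVec_mulVec (hB : IsUnit B)
    (h : (B⁻¹ - vecMulVec u v) *ᵥ y = w) : y = B *ᵥ (w + (v ⬝ᵥ y) • u) := by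
  have hBy : B⁻¹ *ᵥ y = w + (v ⬝ᵥ y) • u := by
    rw [← h, sub_mulVec, vecMulVec_mulVec, op_smul_eq_smul, sub_add_cancel]
  rw [← hBy, mulVec_mulVec, mul_nonsing_inv _ ((isUnit_iff_isUnit_det B).mp hB), one_mulVec]

theorem dotProduct_mul_one_sub_of_inv_sub_vecMulVec_mulVec (hB : IsUnit B)
    (h : (B⁻¹ - vecMulVec u v) *ᵥ y = w) :
    (v ⬝ᵥ y) * (1 - v ⬝ᵥ B *ᵥ u) = v ⬝ᵥ B *ᵥ w := by
  have hy := congrArg (v ⬝ᵥ ·) (eq_mulVec_add_of_inv_sub_vecMulVec_mulVec hB h)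
  simp only [mulVec_add, mulVec_smul, dotProduct_add, dotProduct_smul, smul_eq_mul] at hy
  linear_combination hy

theorem isUnit_inv_sub_vecMulVec (hB : IsUnit B) (ht : v ⬝ᵥ B *ᵥ u ≠ 1) :
    IsUnit (B⁻¹ - vecMulVec u v) := by
  rw [isUnit_iff_isUnit_det, isUnit_iff_ne_zero, Ne, ← exists_mulVec_eq_zero_iff]
  rintro ⟨y, hy0, h⟩
  have hvy : v ⬝ᵥ y = 0 := by
    have := dotProduct_mul_one_sub_of_inv_sub_vecMulVec_mulVec hB h
    rw [mulVec_zero, dotProduct_zero] at this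
    exact (mul_eq_zero.mp this).resolve_right (sub_ne_zero.mpr ht.symm)
  exact hy0 (by simpa [hvy] using eq_mulVec_add_of_inv_sub_vecMulVec_mulVec hB h)

theorem dotProduct_inv_sub_vecMulVec_mulVec (hB : IsUnit B) (ht : v ⬝ᵥ B *ᵥ u ≠ 1)
    (w : m → K) :
    v ⬝ᵥ (B⁻¹ - vecMulVec u v)⁻¹ *ᵥ w = (v ⬝ᵥ B *ᵥ w) / (1 - v ⬝ᵥ B *ᵥ u) := by
  have hM := (isUnit_iff_isUnit_det _).mp (isUnit_inv_sub_vecMulVec hB ht)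
  rw [eq_div_iff (sub_ne_zero.mpr ht.symm)]
  apply dotProduct_mul_one_sub_of_inv_sub_vecMulVec_mulVec hB
  rw [mulVec_mulVec, mul_nonsing_inv _ hM, one_mulVec]

end Matrix

/-- leave-one-out identity for sampled cross validation: with
`a_j = Gᵀe_j`, `t_jj = e_jᵀGBGᵀe_j ≠ 1`, `x = B(g + Gᵀc)` and
`x_[j] = (B⁻¹ − a_j a_jᵀ)⁻¹(g + Gᵀc − a_j e_jᵀc)`, one has
`e_jᵀc − e_jᵀG x_[j] = (1/(1 − t_jj)) e_jᵀ(c − Gx)`. -/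
theorem leave_one_out_residual_identity
    {n ℓ : ℕ} (B : Matrix (Fin n) (Fin n) ℝ) (hB : B.PosDef)
    (G : Matrix (Fin ℓ) (Fin n) ℝ) (g : Fin n → ℝ) (c : Fin ℓ → ℝ) (j : Fin ℓ)
    (a : Fin n → ℝ) (ha : a = Gᵀ.mulVec (Pi.single j 1))
    (t : ℝ) (ht : t = (G * B * Gᵀ) j j) (htne : t ≠ 1)
    (x : Fin n → ℝ) (hx : x = B.mulVec (g + Gᵀ.mulVec c))
    (xj : Fin n → ℝ)
    (hxj : xj = (B⁻¹ - Matrix.vecMulVec a a)⁻¹.mulVec (g + Gᵀ.mulVec c - c j • a)) :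
    c j - (G.mulVec xj) j = (1 / (1 - t)) * (c j - (G.mulVec x) j) := by
  have haG : a = G j := by
    rw [ha, ← vecMul_transpose, transpose_transpose, single_one_vecMul]; rfl
  have hGa (z : Fin n → ℝ) : (G *ᵥ z) j = a ⬝ᵥ z := by rw [haG]; rfl
  have htB : t = a ⬝ᵥ B *ᵥ a := by
    rw [ht, mul_apply', mul_apply_eq_vecMul, dotProduct_mulVec, haG]; rfl
  rw [hGa, hGa, hxj, hx, dotProduct_inv_sub_vecMulVec_mulVec hB.isUnit (htB ▸ htne), ← htB,
    mulVec_sub, mulVec_smul, dotProduct_sub, dotProduct_smul, smul_eq_mul, ← htB]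
  field_simp [sub_ne_zero.mpr htne.symm]
  ring
end
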